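/- Let f : ℝ → ℝ be differentiable everywhere with continuous derivative, let a < b be real numbers, and suppose f is convex on the closed interval [a, b]. If (f(b) − f(a))/(b − a) = deriv f a or (f(b) − f(a))/(b − a) = deriv f b, then deriv f a = deriv f b. -/

import Mathlib

/-!
On `[a, b]` a convex function lies above its tangent line at either endpoint and below its chord.
If the chord slope equals the derivative at an endpoint, the tangent there is the chord, so `f` is
affine on `[a, b]` and its derivative is the same at both endpoints.
-/

open Set

namespace ConvexOn

variable {f : ℝ → ℝ} {a b : ℝ}

theorem eqOn_Icc_of_hasDerivAt_left_eq_slope (hf : ConvexOn ℝ (Icc a b) f)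
    (hfa : HasDerivAt f (slope f a b) a) :
    EqOn f (fun x => f a + slope f a b * (x - a)) (Icc a b) := by
  intro x hx
  obtain rfl | hax := hx.1.eq_or_lt
  · simp
  have hab : a < b := hax.trans_le hx.2
  have ha : a ∈ Icc a b := left_mem_Icc.2 hab.le
  have hb : b ∈ Icc a b := right_mem_Icc.2 hab.le
  have hslope : slope f a x = slope f a b :=
    le_antisymm (hf.slope_mono ha ⟨hx, hax.ne'⟩ ⟨hb, hab.ne'⟩ hx.2)
      (hf.le_slope_of_hasDerivAt ha hx hax hfa)
  have := sub_smul_slope f a x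
  rw [hslope, smul_eq_mul, vsub_eq_sub] at this
  simp only
  linarith

theorem eqOn_Icc_of_hasDerivAt_right_eq_slope (hf : ConvexOn ℝ (Icc a b) f)
    (hfb : HasDerivAt f (slope f a b) b) :
    EqOn f (fun x => f b + slope f a b * (x - b)) (Icc a b) := by
  intro x hx
  obtain rfl | hxb := hx.2.eq_or_lt
  · simp
  have hab : a < b := hx.1.trans_lt hxb
  have ha : a ∈ Icc a b := left_mem_Icc.2 hab.le
  have hb : b ∈ Icc a b := right_mem_Icc.2 hab.le
  have hslope : slope f x b = slope f a b := by
    refine le_antisymm (hf.slope_le_of_hasDerivAt hx hb hxb hfb) ?_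
    rw [slope_comm f a, slope_comm f x]
    exact hf.slope_mono hb ⟨ha, hab.ne⟩ ⟨hx, hxb.ne⟩ hx.1
  have := sub_smul_slope f x b
  rw [hslope, smul_eq_mul, vsub_eq_sub] at this
  simp only
  linarith

end ConvexOn

theorem deriv_eq_of_eqOn_Icc_affine {f : ℝ → ℝ} {a b c d m x : ℝ} (hab : a < b)
    (hfg : EqOn f (fun y => c + m * (y - d)) (Icc a b)) (hx : x ∈ Icc a b)
    (hf : DifferentiableAt ℝ f x) : deriv f x = m := by
  have hg : HasDerivWithinAt (fun y => c + m * (y - d)) m (Icc a b) x := by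
    simpa using (((hasDerivAt_id x).sub_const d).const_mul m).const_add c |>.hasDerivWithinAt
  rw [← hf.derivWithin (uniqueDiffOn_Icc hab x hx),
    (hg.congr hfg (hfg hx)).derivWithin (uniqueDiffOn_Icc hab x hx)]

theorem stmt_13_general (f : ℝ → ℝ) (hf : Differentiable ℝ f)
    (a b : ℝ) (hab : a < b) (h : ConvexOn ℝ (Set.Icc a b) f)
    (hc : (f b - f a) / (b - a) = deriv f a ∨ (f b - f a) / (b - a) = deriv f b) :
    deriv f a = deriv f b := by
  have ha : a ∈ Icc a b := left_mem_Icc.2 hab.le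
  have hb : b ∈ Icc a b := right_mem_Icc.2 hab.le
  rw [← slope_def_field] at hc
  obtain ⟨c, d, haffine⟩ : ∃ c d, EqOn f (fun x => c + slope f a b * (x - d)) (Icc a b) := by
    obtain hca | hcb := hc
    · exact ⟨_, _, h.eqOn_Icc_of_hasDerivAt_left_eq_slope (hca ▸ (hf a).hasDerivAt)⟩
    · exact ⟨_, _, h.eqOn_Icc_of_hasDerivAt_right_eq_slope (hcb ▸ (hf b).hasDerivAt)⟩
  rw [deriv_eq_of_eqOn_Icc_affine hab haffine ha (hf a),
    deriv_eq_of_eqOn_Icc_affine hab haffine hb (hf b)]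

theorem stmt_13 (f : ℝ → ℝ) (hf : Differentiable ℝ f) (hf' : Continuous (deriv f))
    (a b : ℝ) (hab : a < b) (h : ConvexOn ℝ (Set.Icc a b) f)
    (hc : (f b - f a) / (b - a) = deriv f a ∨ (f b - f a) / (b - a) = deriv f b) :
    deriv f a = deriv f b :=
  stmt_13_general f hf a b hab h hc
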